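/- Let M = blkdiag(M₁,…,M_{n₂}), N = blkdiag(N₁,…,N_{n₂}), Φ, Γ, T be block-diagonal real matrices with M_i, Φ_i, T_i ∈ ℝ^{r_i×r_i}, N_i ∈ ℝ^{r_i×1}, Γ_i ∈ ℝ^{1×r_i}, T invertible, and T Φ − M T = N Γ; set Ψ := Γ T⁻¹ and r̄ = r₁+⋯+r_{n₂}. Let ϱ : [0,∞) → ℝ^{r̄} be smooth with ϱ̇ = T Φ T⁻¹ ϱ and ϱ uniformly bounded (hence every derivative ϱ^{(k)} is uniformly bounded), and set d := −Ψ ϱ ∈ ℝ^{n₂}. Let ϱ̂ : [0,∞) → ℝ^{r̄} and θ : [0,∞) → ℝ^{r̄} be continuous functions such that ϱ̂(t) − ϱ(t) → 0 exponentially, θ(t) − C(Ψ) → 0 exponentially, and d̂(t) − d(t) → 0 exponentially, where d̂ := −M(ϱ̂) θ (these convergences are guaranteed by the adaptive observer under the PE condition on the blocks ϱ_i). Define recursively ε₁ := M ϱ̂ − N d̂ and, for k ≥ 1, δ_k := −M(ε_k) θ and ε_{k+1} := M ε_k − N δ_k, where M(ε_k) := blkdiag(ε_{k,1}ᵀ,…,ε_{k,n₂}ᵀ)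 with ε_k = col(ε_{k,1},…,ε_{k,n₂}), ε_{k,i} ∈ ℝ^{r_i}. Then, for every k ≥ 1, ε_k(t) − ϱ^{(k)}(t) → 0 exponentially and δ_k(t) − d^{(k)}(t) → 0 exponentially as t → ∞. -/

import Mathlib

open Matrix Filter Topology

/-- `e(t) → 0` exponentially: `‖e t‖ ≤ c e^{-λ t}` for all sufficiently large `t`. -/
def ExpDecay {E : Type*} [Norm E] (e : ℝ → E) : Prop :=
  ∃ c > (0:ℝ), ∃ lam > (0:ℝ), ∃ T : ℝ, ∀ t ≥ T, ‖e t‖ ≤ c * Real.exp (-lam * t)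

/-- Block index set `Σ i, Fin (r i)` for stacked vectors `col(v₁,…,v_{n₂})`. -/
abbrev BIdx {n₂ : ℕ} (r : Fin n₂ → ℕ) := Σ i : Fin n₂, Fin (r i)

/-- A square matrix indexed by `BIdx r` is block diagonal. -/
def IsBlkDiag {n₂ : ℕ} {r : Fin n₂ → ℕ} (A : Matrix (BIdx r) (BIdx r) ℝ) : Prop :=
  ∀ a b : BIdx r, a.1 ≠ b.1 → A a b = 0

/-- `N = blkdiag(N₁,…,N_{n₂})` with `N_i ∈ ℝ^{r_i × 1}`. -/
def IsBlkCol {n₂ : ℕ} {r : Fin n₂ → ℕ} (N : Matrix (BIdx r) (Fin n₂) ℝ) : Prop :=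
  ∀ (a : BIdx r) (j : Fin n₂), a.1 ≠ j → N a j = 0

/-- `Γ = blkdiag(Γ₁,…,Γ_{n₂})` with `Γ_i ∈ ℝ^{1 × r_i}`. -/
def IsBlkRow {n₂ : ℕ} {r : Fin n₂ → ℕ} (Γ : Matrix (Fin n₂) (BIdx r) ℝ) : Prop :=
  ∀ (j : Fin n₂) (a : BIdx r), j ≠ a.1 → Γ j a = 0

/-- `𝓜(ϱ) = blkdiag(ϱ₁ᵀ,…,ϱ_{n₂}ᵀ) ∈ ℝ^{n₂ × r̄}` built from a stacked vector. -/
def MMat {n₂ : ℕ} {r : Fin n₂ → ℕ} (v : EuclideanSpace ℝ (BIdx r)) :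
    Matrix (Fin n₂) (BIdx r) ℝ :=
  Matrix.of fun i a => if a.1 = i then v a else 0

/-- `𝓒(Ψ) = col(Ψ₁ᵀ,…,Ψ_{n₂}ᵀ) ∈ ℝ^{r̄}` built from a block-row matrix. -/
noncomputable def CVec {n₂ : ℕ} {r : Fin n₂ → ℕ} (Ψ : Matrix (Fin n₂) (BIdx r) ℝ) :
    EuclideanSpace ℝ (BIdx r) :=
  (WithLp.equiv 2 _).symm fun a => Ψ a.1 a


section decay
variable {E F : Type*} [NormedAddCommGroup E] [NormedAddCommGroup F]

lemma ExpDecay.of_le {e : ℝ → E} {f : ℝ → F} (he : ExpDecay e) (K T' : ℝ)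
    (hb : ∀ t ≥ T', ‖f t‖ ≤ K * ‖e t‖) : ExpDecay f := by
  obtain ⟨c, hc, lam, hlam, T, hT⟩ := he
  refine ⟨|K| * c + 1, by positivity, lam, hlam, max T T', fun t ht => ?_⟩
  have h1 := hb t (le_trans (le_max_right _ _) ht)
  have h2 := hT t (le_trans (le_max_left _ _) ht)
  have h3 : (0:ℝ) < Real.exp (-lam * t) := Real.exp_pos _
  have h4 : K * ‖e t‖ ≤ |K| * ‖e t‖ :=
    mul_le_mul_of_nonneg_right (le_abs_self K) (norm_nonneg _)
  nlinarith [abs_nonneg K, norm_nonneg (e t)]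

lemma ExpDecay.add {e₁ e₂ : ℝ → E} (h₁ : ExpDecay e₁) (h₂ : ExpDecay e₂) :
    ExpDecay (fun t => e₁ t + e₂ t) := by
  obtain ⟨c₁, hc₁, l₁, hl₁, T₁, hT₁⟩ := h₁
  obtain ⟨c₂, hc₂, l₂, hl₂, T₂, hT₂⟩ := h₂
  refine ⟨c₁ + c₂, by positivity, min l₁ l₂, lt_min hl₁ hl₂, max (max T₁ T₂) 0,
    fun t ht => ?_⟩
  have ht0 : (0:ℝ) ≤ t := le_trans (le_max_right _ _) ht
  have e1 : Real.exp (-l₁ * t) ≤ Real.exp (-(min l₁ l₂) * t) := by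
    apply Real.exp_le_exp.2; nlinarith [min_le_left l₁ l₂]
  have e2 : Real.exp (-l₂ * t) ≤ Real.exp (-(min l₁ l₂) * t) := by
    apply Real.exp_le_exp.2; nlinarith [min_le_right l₁ l₂]
  have b1 := hT₁ t (le_trans (le_max_left _ _) (le_trans (le_max_left _ _) ht))
  have b2 := hT₂ t (le_trans (le_max_right _ _) (le_trans (le_max_left _ _) ht))
  calc ‖e₁ t + e₂ t‖ ≤ ‖e₁ t‖ + ‖e₂ t‖ := norm_add_le _ _
    _ ≤ c₁ * Real.exp (-(min l₁ l₂) * t) + c₂ * Real.exp (-(min l₁ l₂) * t) := by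
        gcongr <;> [exact le_trans b1 (by nlinarith); exact le_trans b2 (by nlinarith)]
    _ = (c₁ + c₂) * Real.exp (-(min l₁ l₂) * t) := by ring

lemma ExpDecay.neg {e : ℝ → E} (h : ExpDecay e) : ExpDecay (fun t => -(e t)) :=
  h.of_le 1 0 (fun t _ => by simp)

lemma ExpDecay.sub {e₁ e₂ : ℝ → E} (h₁ : ExpDecay e₁) (h₂ : ExpDecay e₂) :
    ExpDecay (fun t => e₁ t - e₂ t) := by
  simpa [sub_eq_add_neg] using h₁.add h₂.neg

variable [NormedSpace ℝ E] [NormedSpace ℝ F]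

lemma ExpDecay.clm (L : E →L[ℝ] F) {e : ℝ → E} (h : ExpDecay e) :
    ExpDecay (fun t => L (e t)) :=
  h.of_le ‖L‖ 0 (fun t _ => L.le_opNorm (e t))

end decay

section mat

variable {n₂ : ℕ} {r : Fin n₂ → ℕ}

lemma toEL_mul {l m n : Type*} [Fintype m] [Fintype n] [DecidableEq m] [DecidableEq n]
    (A : Matrix l m ℝ) (B : Matrix m n ℝ) (v : EuclideanSpace ℝ n) :
    Matrix.toEuclideanLin (A * B) v = Matrix.toEuclideanLin A (Matrix.toEuclideanLin B v) := by
  simp [Matrix.toEuclideanLin_apply, Matrix.mulVec_mulVec]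

lemma toEL_one {n : Type*} [Fintype n] [DecidableEq n] (v : EuclideanSpace ℝ n) :
    Matrix.toEuclideanLin (1 : Matrix n n ℝ) v = v := by
  simp [Matrix.toEuclideanLin_apply, Matrix.one_mulVec]

lemma MMat_add (v w : EuclideanSpace ℝ (BIdx r)) : MMat (v + w) = MMat v + MMat w := by
  ext i a
  simp only [MMat, Matrix.of_apply, Matrix.add_apply, PiLp.add_apply]
  split <;> simp

lemma MMat_smul (c : ℝ) (v : EuclideanSpace ℝ (BIdx r)) : MMat (c • v) = c • MMat v := by
  ext i a
  simp only [MMat, Matrix.of_apply, Matrix.smul_apply, PiLp.smul_apply, smul_eq_mul]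
  split <;> simp

lemma MMat_CVec {Ψ : Matrix (Fin n₂) (BIdx r) ℝ} (hΨ : IsBlkRow Ψ)
    (v : EuclideanSpace ℝ (BIdx r)) :
    Matrix.toEuclideanLin (MMat v) (CVec Ψ) = Matrix.toEuclideanLin Ψ v := by
  ext i
  simp only [Matrix.toEuclideanLin_apply, CVec, WithLp.equiv_symm_apply,
    PiLp.toLp_apply, Matrix.mulVec, dotProduct, MMat, Matrix.of_apply]
  apply Finset.sum_congr rfl
  intro a _
  by_cases h : a.1 = i
  · subst h; simp [mul_comm]
  · simp [h, hΨ i a (Ne.symm h)]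

end mat

section blk
variable {n₂ : ℕ} {r : Fin n₂ → ℕ}

lemma IsBlkDiag.inv {T : Matrix (BIdx r) (BIdx r) ℝ} (hT : IsUnit T) (hTblk : IsBlkDiag T) :
    IsBlkDiag T⁻¹ := by
  have hdet : IsUnit T.det := (Matrix.isUnit_iff_isUnit_det T).1 hT
  have h1 : T * T⁻¹ = 1 := Matrix.mul_nonsing_inv T hdet
  have h2 : T⁻¹ * T = 1 := Matrix.nonsing_inv_mul T hdet
  set P : Fin n₂ → Matrix (BIdx r) (BIdx r) ℝ :=
    fun i => Matrix.diagonal (fun a => if a.1 = i then (1:ℝ) else 0) with hP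
  have hcomm : ∀ i, P i * T = T * P i := by
    intro i
    ext a b
    rw [Matrix.diagonal_mul, Matrix.mul_diagonal]
    by_cases hab : a.1 = b.1
    · rw [hab]
      ring
    · rw [hTblk a b hab]
      ring
  have hcomm' : ∀ i, P i * T⁻¹ = T⁻¹ * P i := by
    intro i
    calc P i * T⁻¹ = T⁻¹ * T * (P i * T⁻¹) := by rw [h2, one_mul]
      _ = T⁻¹ * (T * P i) * T⁻¹ := by noncomm_ring
      _ = T⁻¹ * (P i * T) * T⁻¹ := by rw [hcomm]
      _ = T⁻¹ * P i * (T * T⁻¹) := by noncomm_ring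
      _ = T⁻¹ * P i := by rw [h1, mul_one]
  intro a b hab
  have := congrFun (congrFun (hcomm' a.1) a) b
  rw [Matrix.diagonal_mul, Matrix.mul_diagonal] at this
  rw [if_pos rfl, one_mul, if_neg (fun h : b.1 = a.1 => hab h.symm), mul_zero] at this
  exact this

lemma IsBlkRow.mul_blkdiag {Γ : Matrix (Fin n₂) (BIdx r) ℝ} {T : Matrix (BIdx r) (BIdx r) ℝ}
    (hΓ : IsBlkRow Γ) (hT : IsBlkDiag T) : IsBlkRow (Γ * T) := by
  intro j a hja
  show (Γ * T) j a = 0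
  rw [Matrix.mul_apply]
  apply Finset.sum_eq_zero
  intro b _
  by_cases hb : j = b.1
  · rw [hT b a (hb ▸ hja), mul_zero]
  · rw [hΓ j b hb, zero_mul]

end blk

lemma MMat_sub {n₂ : ℕ} {r : Fin n₂ → ℕ} (v w : EuclideanSpace ℝ (BIdx r)) :
    MMat (v - w) = MMat v - MMat w := by
  ext i a
  simp only [MMat, Matrix.of_apply, Matrix.sub_apply, PiLp.sub_apply]
  split <;> simp

lemma ExpDecay.matvec {m n : Type*} [Fintype m] [Fintype n] [DecidableEq n]
    (Q : Matrix m n ℝ) {e : ℝ → EuclideanSpace ℝ n} (h : ExpDecay e) :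
    ExpDecay (fun t => Matrix.toEuclideanLin Q (e t)) := by
  have := h.clm (LinearMap.toContinuousLinearMap (Matrix.toEuclideanLin Q))
  simpa using this

lemma MMat_bound {n₂ : ℕ} {r : Fin n₂ → ℕ} : ∃ K : ℝ, 0 ≤ K ∧
    ∀ (v w : EuclideanSpace ℝ (BIdx r)),
      ‖Matrix.toEuclideanLin (MMat v) w‖ ≤ K * ‖v‖ * ‖w‖ := by
  let B₀ : EuclideanSpace ℝ (BIdx r) →ₗ[ℝ]
      (EuclideanSpace ℝ (BIdx r) →L[ℝ] EuclideanSpace ℝ (Fin n₂)) :=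
    { toFun := fun v => LinearMap.toContinuousLinearMap (Matrix.toEuclideanLin (MMat v))
      map_add' := fun v w => by
        ext x
        simp [MMat_add]
      map_smul' := fun c v => by
        ext x
        simp [MMat_smul] }
  let B := LinearMap.toContinuousLinearMap B₀
  refine ⟨‖B‖, ContinuousLinearMap.opNorm_nonneg _, fun v w => ?_⟩
  have h := B.le_opNorm₂ v w
  simpa [B, B₀] using h

set_option maxHeartbeats 1000000 in
/-- The recursively defined signals `ε_k` and `δ_k` estimate
the `k`-th derivatives of the exosystem state `ϱ` and of the disturbance
`d = −Ψ ϱ`, with exponentially convergent errors. -/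
theorem stmt5 {n₂ : ℕ} (r : Fin n₂ → ℕ) (hr : ∀ i, 0 < r i)
    (M Φ T : Matrix (BIdx r) (BIdx r) ℝ)
    (N : Matrix (BIdx r) (Fin n₂) ℝ) (Γ : Matrix (Fin n₂) (BIdx r) ℝ)
    (hMblk : IsBlkDiag M) (hΦblk : IsBlkDiag Φ) (hTblk : IsBlkDiag T)
    (hNblk : IsBlkCol N) (hΓblk : IsBlkRow Γ)
    (hT : IsUnit T) (hSyl : T * Φ - M * T = N * Γ)
    (ϱ : ℝ → EuclideanSpace ℝ (BIdx r))
    (hϱsmooth : ContDiff ℝ (⊤ : ℕ∞) ϱ)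
    (hϱ : ∀ t ≥ (0:ℝ), HasDerivAt ϱ (Matrix.toEuclideanLin (T * Φ * T⁻¹) (ϱ t)) t)
    (hϱbdd : ∃ C, ∀ t ≥ (0:ℝ), ‖ϱ t‖ ≤ C)
    (ϱhat θ : ℝ → EuclideanSpace ℝ (BIdx r))
    (hϱhatc : ContinuousOn ϱhat (Set.Ici 0)) (hθc : ContinuousOn θ (Set.Ici 0))
    (hϱhat : ExpDecay (fun t => ϱhat t - ϱ t))
    (hθ : ExpDecay (fun t => θ t - CVec (Γ * T⁻¹)))
    (hdhat : ExpDecay (fun t =>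
      (-(Matrix.toEuclideanLin (MMat (ϱhat t)) (θ t)))
        - (-(Matrix.toEuclideanLin (Γ * T⁻¹) (ϱ t)))))
    (ε : ℕ → ℝ → EuclideanSpace ℝ (BIdx r))
    (δ : ℕ → ℝ → EuclideanSpace ℝ (Fin n₂))
    (hε1 : ∀ t, ε 1 t = Matrix.toEuclideanLin M (ϱhat t)
      - Matrix.toEuclideanLin N (-(Matrix.toEuclideanLin (MMat (ϱhat t)) (θ t))))
    (hδk : ∀ k ≥ 1, ∀ t, δ k t = -(Matrix.toEuclideanLin (MMat (ε k t)) (θ t)))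
    (hεsucc : ∀ k ≥ 1, ∀ t, ε (k + 1) t =
      Matrix.toEuclideanLin M (ε k t) - Matrix.toEuclideanLin N (δ k t)) :
    ∀ k ≥ 1,
      ExpDecay (fun t => ε k t - iteratedDeriv k ϱ t) ∧
      ExpDecay (fun t => δ k t -
        iteratedDeriv k (fun s => -(Matrix.toEuclideanLin (Γ * T⁻¹) (ϱ s))) t) := by
  classical
  set Ψm : Matrix (Fin n₂) (BIdx r) ℝ := Γ * T⁻¹ with hΨdef
  set A : Matrix (BIdx r) (BIdx r) ℝ := T * Φ * T⁻¹ with hAdef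
  have hdet : IsUnit T.det := (Matrix.isUnit_iff_isUnit_det T).1 hT
  have hΨblk : IsBlkRow Ψm := hΓblk.mul_blkdiag (IsBlkDiag.inv hT hTblk)
  have hA : A = M + N * Ψm := by
    have h1 : T * Φ = M * T + N * Γ := by
      rw [← sub_eq_iff_eq_add']
      exact hSyl
    rw [hAdef, h1, Matrix.add_mul, Matrix.mul_assoc N Γ T⁻¹,
      Matrix.mul_nonsing_inv_cancel_right T M hdet, hΨdef]
  -- iterated derivatives of ϱ
  have hpow : ∀ k : ℕ, ∀ t : ℝ, 0 < t →
      iteratedDeriv k ϱ t = Matrix.toEuclideanLin (A ^ k) (ϱ t) := by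
    intro k
    induction k with
    | zero => intro t _; simp [toEL_one]
    | succ k ih =>
      intro t ht
      rw [iteratedDeriv_succ]
      have heq : (iteratedDeriv k ϱ) =ᶠ[nhds t]
          fun s => Matrix.toEuclideanLin (A ^ k) (ϱ s) := by
        filter_upwards [eventually_gt_nhds ht] with s hs using ih s hs
      rw [heq.deriv_eq]
      have hd : HasDerivAt (fun s => Matrix.toEuclideanLin (A ^ k) (ϱ s))
          (Matrix.toEuclideanLin (A ^ k) (Matrix.toEuclideanLin A (ϱ t))) t :=
        (LinearMap.toContinuousLinearMap
          (Matrix.toEuclideanLin (A ^ k))).hasFDerivAt.comp_hasDerivAt t (hϱ t ht.le)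
      rw [hd.deriv, ← toEL_mul, ← pow_succ]
  -- iterated derivatives of d
  have hdiffk : ∀ k : ℕ, Differentiable ℝ (iteratedDeriv k ϱ) := by
    intro k
    exact hϱsmooth.differentiable_iteratedDeriv k (by
      exact_mod_cast ENat.coe_lt_top k)
  have hdfun : ∀ (k : ℕ),
      iteratedDeriv k (fun s => -(Matrix.toEuclideanLin Ψm (ϱ s)))
        = fun t => -(Matrix.toEuclideanLin Ψm (iteratedDeriv k ϱ t)) := by
    intro k
    induction k with
    | zero => simp [iteratedDeriv_zero]
    | succ k ih =>
      funext t
      rw [iteratedDeriv_succ, ih, iteratedDeriv_succ]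
      have h1 : HasDerivAt (fun s => -(Matrix.toEuclideanLin Ψm (iteratedDeriv k ϱ s)))
          (-(Matrix.toEuclideanLin Ψm (deriv (iteratedDeriv k ϱ) t))) t :=
        ((LinearMap.toContinuousLinearMap
          (Matrix.toEuclideanLin Ψm)).hasFDerivAt.comp_hasDerivAt t
            (hdiffk k t).hasDerivAt).neg
      rw [h1.deriv]
  -- bounds
  obtain ⟨C, hC⟩ := hϱbdd
  have hbndk : ∀ k : ℕ, ∃ Ck : ℝ, 0 ≤ Ck ∧ ∀ t ≥ (1:ℝ), ‖iteratedDeriv k ϱ t‖ ≤ Ck := by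
    intro k
    set L := LinearMap.toContinuousLinearMap (Matrix.toEuclideanLin (A ^ k)) with hL
    refine ⟨‖L‖ * max C 0, by positivity, fun t ht => ?_⟩
    rw [hpow k t (lt_of_lt_of_le one_pos ht)]
    have h1 : ‖Matrix.toEuclideanLin (A ^ k) (ϱ t)‖ = ‖L (ϱ t)‖ := by simp [hL]
    rw [h1]
    calc ‖L (ϱ t)‖ ≤ ‖L‖ * ‖ϱ t‖ := L.le_opNorm _
      _ ≤ ‖L‖ * max C 0 := by
          gcongr
          exact le_trans (hC t (by linarith)) (le_max_left _ _)
  obtain ⟨cθ, hcθ, lθ, hlθ, Tθ, hTθ⟩ := hθ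
  have hθbound : ∀ t ≥ max Tθ 0, ‖θ t‖ ≤ cθ + ‖CVec Ψm‖ := by
    intro t ht
    have h1 := hTθ t (le_trans (le_max_left _ _) ht)
    have ht0 : (0:ℝ) ≤ t := le_trans (le_max_right _ _) ht
    have h2 : Real.exp (-lθ * t) ≤ 1 := Real.exp_le_one_iff.2 (by nlinarith)
    calc ‖θ t‖ = ‖(θ t - CVec Ψm) + CVec Ψm‖ := by rw [sub_add_cancel]
      _ ≤ ‖θ t - CVec Ψm‖ + ‖CVec Ψm‖ := norm_add_le _ _
      _ ≤ cθ + ‖CVec Ψm‖ := by nlinarith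
  obtain ⟨K, hK, hKb⟩ := MMat_bound (r := r)
  -- the δ step
  have δstep : ∀ k : ℕ, 1 ≤ k →
      ExpDecay (fun t => ε k t - iteratedDeriv k ϱ t) →
      ExpDecay (fun t => δ k t -
        iteratedDeriv k (fun s => -(Matrix.toEuclideanLin Ψm (ϱ s))) t) := by
    intro k hk hεd
    obtain ⟨Ck, hCk, hCkb⟩ := hbndk k
    have hf1 : ExpDecay (fun t =>
        -(Matrix.toEuclideanLin (MMat (ε k t - iteratedDeriv k ϱ t)) (θ t))) := by
      refine hεd.of_le (K * (cθ + ‖CVec Ψm‖)) (max Tθ 0) (fun t ht => ?_)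
      rw [norm_neg]
      have h1 := hKb (ε k t - iteratedDeriv k ϱ t) (θ t)
      have h2 := hθbound t ht
      have h3 : (0:ℝ) ≤ ‖ε k t - iteratedDeriv k ϱ t‖ := norm_nonneg _
      calc ‖Matrix.toEuclideanLin (MMat (ε k t - iteratedDeriv k ϱ t)) (θ t)‖
          ≤ K * ‖ε k t - iteratedDeriv k ϱ t‖ * ‖θ t‖ := h1
        _ ≤ K * ‖ε k t - iteratedDeriv k ϱ t‖ * (cθ + ‖CVec Ψm‖) :=
            mul_le_mul_of_nonneg_left h2 (mul_nonneg hK h3)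
        _ = K * (cθ + ‖CVec Ψm‖) * ‖ε k t - iteratedDeriv k ϱ t‖ := by ring
    have hf2 : ExpDecay (fun t =>
        -(Matrix.toEuclideanLin (MMat (iteratedDeriv k ϱ t)) (θ t - CVec Ψm))) := by
      have hθ' : ExpDecay (fun t => θ t - CVec Ψm) := ⟨cθ, hcθ, lθ, hlθ, Tθ, hTθ⟩
      refine hθ'.of_le (K * Ck) 1 (fun t ht => ?_)
      rw [norm_neg]
      have h1 := hKb (iteratedDeriv k ϱ t) (θ t - CVec Ψm)
      have h2 := hCkb t ht
      calc ‖Matrix.toEuclideanLin (MMat (iteratedDeriv k ϱ t)) (θ t - CVec Ψm)‖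
          ≤ K * ‖iteratedDeriv k ϱ t‖ * ‖θ t - CVec Ψm‖ := h1
        _ ≤ K * Ck * ‖θ t - CVec Ψm‖ :=
            mul_le_mul_of_nonneg_right
              (mul_le_mul_of_nonneg_left h2 hK) (norm_nonneg _)
    refine (hf1.add hf2).of_le 1 0 (fun t _ => ?_)
    rw [one_mul]
    have heq : δ k t - iteratedDeriv k (fun s => -(Matrix.toEuclideanLin Ψm (ϱ s))) t
        = -(Matrix.toEuclideanLin (MMat (ε k t - iteratedDeriv k ϱ t)) (θ t))
          + -(Matrix.toEuclideanLin (MMat (iteratedDeriv k ϱ t)) (θ t - CVec Ψm)) := by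
      rw [hδk k hk t, hdfun k]
      have e1 : Matrix.toEuclideanLin (MMat (ε k t - iteratedDeriv k ϱ t)) (θ t)
          = Matrix.toEuclideanLin (MMat (ε k t)) (θ t)
            - Matrix.toEuclideanLin (MMat (iteratedDeriv k ϱ t)) (θ t) := by
        rw [MMat_sub, map_sub, LinearMap.sub_apply]
      have e2 : Matrix.toEuclideanLin (MMat (iteratedDeriv k ϱ t)) (θ t - CVec Ψm)
          = Matrix.toEuclideanLin (MMat (iteratedDeriv k ϱ t)) (θ t)
            - Matrix.toEuclideanLin Ψm (iteratedDeriv k ϱ t) := by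
        rw [map_sub, MMat_CVec hΨblk]
      rw [e1, e2]
      simp only [neg_sub, sub_neg_eq_add]
      abel
    rw [heq]
  -- base case for ε
  have hbase : ExpDecay (fun t => ε 1 t - iteratedDeriv 1 ϱ t) := by
    have h1 : ExpDecay (fun t => Matrix.toEuclideanLin M (ϱhat t - ϱ t)) :=
      hϱhat.matvec M
    have h2 : ExpDecay (fun t => Matrix.toEuclideanLin N
        ((-(Matrix.toEuclideanLin (MMat (ϱhat t)) (θ t)))
          - (-(Matrix.toEuclideanLin Ψm (ϱ t))))) :=
      hdhat.matvec N
    refine (h1.sub h2).of_le 1 1 (fun t ht => ?_)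
    rw [one_mul]
    have heq : ε 1 t - iteratedDeriv 1 ϱ t
        = Matrix.toEuclideanLin M (ϱhat t - ϱ t)
          - Matrix.toEuclideanLin N
            ((-(Matrix.toEuclideanLin (MMat (ϱhat t)) (θ t)))
              - (-(Matrix.toEuclideanLin Ψm (ϱ t)))) := by
      rw [hε1 t, hpow 1 t (by linarith), pow_one, hA, map_add, LinearMap.add_apply,
        toEL_mul, map_sub, map_sub, map_neg, map_neg]
      abel
    rw [heq]
  -- main induction
  intro k hk
  induction k, hk using Nat.le_induction with
  | base => exact ⟨hbase, δstep 1 le_rfl hbase⟩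
  | succ k hk ih =>
    have hδd := δstep k hk ih.1
    have hε' : ExpDecay (fun t => ε (k + 1) t - iteratedDeriv (k + 1) ϱ t) := by
      have h1 : ExpDecay (fun t =>
          Matrix.toEuclideanLin M (ε k t - iteratedDeriv k ϱ t)) := ih.1.matvec M
      have h2 : ExpDecay (fun t => Matrix.toEuclideanLin N
          (δ k t - iteratedDeriv k (fun s => -(Matrix.toEuclideanLin Ψm (ϱ s))) t)) :=
        hδd.matvec N
      refine (h1.sub h2).of_le 1 1 (fun t ht => ?_)
      rw [one_mul]
      have heq : ε (k + 1) t - iteratedDeriv (k + 1) ϱ t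
          = Matrix.toEuclideanLin M (ε k t - iteratedDeriv k ϱ t)
            - Matrix.toEuclideanLin N
              (δ k t - iteratedDeriv k (fun s => -(Matrix.toEuclideanLin Ψm (ϱ s))) t) := by
        rw [hεsucc k hk t, hpow (k + 1) t (by linarith), pow_succ', toEL_mul,
          ← hpow k t (by linarith), hA, map_add, LinearMap.add_apply, toEL_mul,
          hdfun k]
        simp only [map_sub, map_neg]
        abel
      rw [heq]
    exact ⟨hε', δstep (k + 1) (by omega) hε'⟩
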